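/- arXiv:1610.03924 — 4 statements merged into one kernel-verified Lean document; each statement's English description precedes it below -/
import Mathlib

section
/- Let k, Δ, dx be real numbers and S a finite set of vertices with |S| ≥ 3, with degrees d(v) for v ∈ S. Suppose 2 + |S|·k ≤ dx + Σ_{v∈S} d(v), that k ≥ (5/6)(dx + d(v) − μ(v)) − 1/3 for each v ∈ S where μ(v) ≥ 0, and Σ_{v∈S} μ(v) ≤ dx. Then dx ≤ (2|S| − 12 + Σ_{v∈S} d(v)) / (5|S| − 11). -/
/-- arithmetic content of Claim 1 of the Weak 5/6-Theorem. -/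
theorem stmt6 {V : Type*} (S : Finset V) (hS : 3 ≤ S.card)
    (k dx : ℝ) (d mu : V → ℝ)
    (hd : ∀ v ∈ S, 0 ≤ d v) (hmu : ∀ v ∈ S, 0 ≤ mu v)
    (hdx : 0 ≤ dx) (hk : 0 ≤ k)
    (h1 : 2 + S.card * k ≤ dx + ∑ v ∈ S, d v)
    (h2 : ∀ v ∈ S, (5 / 6) * (dx + d v - mu v) - 1 / 3 ≤ k)
    (h3 : ∑ v ∈ S, mu v ≤ dx) :
    dx ≤ (2 * S.card - 12 + ∑ v ∈ S, d v) / (5 * S.card - 11) := by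
  set n : ℝ := (S.card : ℝ) with hn
  have hn3 : (3 : ℝ) ≤ n := by rw [hn]; exact_mod_cast hS
  have hsum : ∑ v ∈ S, ((5 / 6) * (dx + d v - mu v) - 1 / 3) ≤ n * k := by
    calc ∑ v ∈ S, ((5 / 6) * (dx + d v - mu v) - 1 / 3)
        ≤ ∑ _v ∈ S, k := Finset.sum_le_sum fun v hv => h2 v hv
      _ = n * k := by rw [Finset.sum_const, nsmul_eq_mul]
  have hexp : (5/6) * (n * dx + (∑ v ∈ S, d v) - ∑ v ∈ S, mu v) - n/3 ≤ n * k := by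
    refine le_trans (le_of_eq ?_) hsum
    simp only [Finset.sum_sub_distrib, Finset.sum_add_distrib, Finset.mul_sum,
      Finset.sum_const, nsmul_eq_mul, mul_sub, mul_add, ← hn]
    ring
  have hpos : (0 : ℝ) < 5 * n - 11 := by linarith
  rw [le_div_iff₀ hpos]
  nlinarith [h1, hexp, h3]
end

section
/- The graph parameters γ_1 and γ_2 are monotone under induced subgraphs: if H is an induced subgraph of G, then γ_r(H) ≤ γ_r(G) for r ∈ {1, 2}. -/
open scoped Classical

namespace StmtDefs

/-- omega(v): the size of a largest clique containing v. -/
noncomputable def cliqueAt {V : Type*} (Q : SimpleGraph V) (v : V) : ℕ :=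
  sSup {n | ∃ s : Finset V, Q.IsNClique n s ∧ v ∈ s}

/-- The degree of a vertex of a simple graph. -/
noncomputable def ndeg {V : Type*} (Q : SimpleGraph V) (v : V) : ℕ :=
  Nat.card {w | Q.Adj v w}

/-- The average of (d(v) + omega(v) + 1)/2 over a set X of vertices. -/
noncomputable def gammaVal {V : Type*} (Q : SimpleGraph V) (X : Finset V) : ℝ :=
  (X.card : ℝ)⁻¹ * ∑ v ∈ X, ((ndeg Q v : ℝ) + (cliqueAt Q v : ℝ) + 1) / 2

/-- A maximal clique. -/
def IsMaxClique {V : Type*} (Q : SimpleGraph V) (s : Finset V) : Prop :=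
  Q.IsClique ↑s ∧ ∀ t : Finset V, Q.IsClique ↑t → s ⊆ t → s = t

/-- gamma_r(Q): max over cliques of size exactly r and maximal cliques of size
less than r of the average of (d(v) + omega(v) + 1)/2. -/
noncomputable def gamma {V : Type*} (Q : SimpleGraph V) (r : ℕ) : ℝ :=
  sSup {x | ∃ X : Finset V,
    ((Q.IsClique ↑X ∧ X.card = r) ∨ (IsMaxClique Q X ∧ X.card < r)) ∧
    x = gammaVal Q X}

/-- gamma-tilde_r(Q): max of gamma_r over all subgraphs of Q. -/
noncomputable def gammaTilde {V : Type*} (Q : SimpleGraph V) (r : ℕ) : ℝ :=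
  sSup {x | ∃ (s : Set V) (H : SimpleGraph s), H ≤ Q.induce s ∧ x = gamma H r}

/-- The chromatic number of a simple graph, as a natural number. -/
noncomputable def sgChrom {V : Type*} (Q : SimpleGraph V) : ℕ :=
  sInf {n | Q.Colorable n}

/-- The clique number of a simple graph. -/
noncomputable def cliqueNum {V : Type*} (Q : SimpleGraph V) : ℕ :=
  sSup {n | ∃ s : Finset V, Q.IsNClique n s}

/-- The maximum degree of a finite simple graph. -/
noncomputable def sgMaxDegree {V : Type*} [Fintype V] (Q : SimpleGraph V) : ℕ :=
  Finset.univ.sup (fun v => Nat.card {w | Q.Adj v w})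

end StmtDefs

open StmtDefs

/-!
An injective graph homomorphism `f : H → G` (in particular the inclusion of an induced subgraph)
can only increase degrees and clique sizes, so it increases the average `gammaVal` of every
clique and maps `r`-cliques to `r`-cliques. The only members of `C_r(H)` that need not map into
`C_r(G)` are maximal cliques of size `< r ≤ 2`: the empty clique, of value `0 ≤ γ_r(G)`, and an
isolated vertex of `H`, of value `(0 + 1 + 1)/2 = 1`, while `γ_r(G) ≥ 1` for `r ≥ 1` because
every nonempty set has average at least `1` and `C_r(G)` contains a nonempty set.
-/

open Finset

namespace StmtDefs

variable {V : Type*} {G : SimpleGraph V}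

/-- The family `C_r(G)` over which `gamma G r` is the supremum of `gammaVal G`. -/
def cliqueFamily (G : SimpleGraph V) (r : ℕ) : Set (Finset V) :=
  {X | (G.IsClique ↑X ∧ #X = r) ∨ (IsMaxClique G X ∧ #X < r)}

/-- The sizes of the cliques through `v`, whose supremum is `cliqueAt G v`. -/
def cliqueSizesAt (G : SimpleGraph V) (v : V) : Set ℕ :=
  {n | ∃ s : Finset V, G.IsNClique n s ∧ v ∈ s}

lemma bddAbove_cliqueSizesAt [Finite V] (v : V) : BddAbove (cliqueSizesAt G v) := by
  have := Fintype.ofFinite V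
  exact ⟨Fintype.card V, fun n ⟨s, hs, _⟩ => hs.card_eq ▸ s.card_le_univ⟩

lemma one_mem_cliqueSizesAt (v : V) : 1 ∈ cliqueSizesAt G v :=
  ⟨{v}, SimpleGraph.isNClique_singleton.2 rfl, mem_singleton_self v⟩

lemma one_le_cliqueAt [Finite V] (v : V) : 1 ≤ cliqueAt G v :=
  le_csSup (bddAbove_cliqueSizesAt v) (one_mem_cliqueSizesAt v)

lemma cliqueAt_eq_one_of_forall_not_adj {v : V} (hv : ∀ w, ¬ G.Adj v w) :
    cliqueAt G v = 1 := by
  have hsizes : cliqueSizesAt G v = {1} := by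
    refine Set.eq_singleton_iff_unique_mem.2 ⟨one_mem_cliqueSizesAt v, ?_⟩
    rintro n ⟨s, hs, hvs⟩
    have hs_eq : s = {v} := eq_singleton_iff_unique_mem.2
      ⟨hvs, fun w hws => by_contra fun hwv => hv w (hs.isClique hvs hws (Ne.symm hwv))⟩
    rw [← hs.card_eq, hs_eq, card_singleton]
  change sSup (cliqueSizesAt G v) = 1
  rw [hsizes, csSup_singleton]

lemma ndeg_eq_zero_of_forall_not_adj {v : V} (hv : ∀ w, ¬ G.Adj v w) : ndeg G v = 0 := by
  simp [ndeg, hv]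

lemma IsMaxClique.not_adj_of_singleton {v : V} (h : IsMaxClique G {v}) (w : V) :
    ¬ G.Adj v w := by
  intro hvw
  have hpair : G.IsClique ↑({v, w} : Finset V) := by
    rw [coe_pair]
    exact SimpleGraph.isClique_pair.2 fun _ => hvw
  have hw : w ∈ ({v} : Finset V) := (h.2 {v, w} hpair (by simp)) ▸ by simp
  exact hvw.ne (mem_singleton.1 hw).symm

lemma gammaVal_empty : gammaVal G ∅ = 0 := by
  simp [gammaVal]

lemma gammaVal_nonneg (X : Finset V) : 0 ≤ gammaVal G X := by
  unfold gammaVal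
  positivity

lemma one_le_gammaVal [Finite V] {X : Finset V} (hX : X.Nonempty) : 1 ≤ gammaVal G X := by
  have hterm : ∀ v ∈ X, (1 : ℝ) ≤ ((ndeg G v : ℝ) + (cliqueAt G v : ℝ) + 1) / 2 := by
    intro v _
    have : (1 : ℝ) ≤ cliqueAt G v := by exact_mod_cast one_le_cliqueAt v
    have : (0 : ℝ) ≤ ndeg G v := Nat.cast_nonneg _
    linarith
  rw [gammaVal, le_inv_mul_iff₀ (by exact_mod_cast hX.card_pos), mul_one]
  simpa using card_nsmul_le_sum X _ 1 hterm

lemma IsMaxClique.gammaVal_singleton {v : V} (h : IsMaxClique G {v}) : gammaVal G {v} = 1 := by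
  rw [gammaVal, sum_singleton, ndeg_eq_zero_of_forall_not_adj h.not_adj_of_singleton,
    cliqueAt_eq_one_of_forall_not_adj h.not_adj_of_singleton]
  norm_num

lemma _root_.SimpleGraph.IsMaximumClique.isMaxClique [Finite V] {M : Finset V}
    (hM : G.IsMaximumClique M) : IsMaxClique G M :=
  ⟨hM.isClique, fun t ht hMt => eq_of_subset_of_card_le hMt (hM.maximum t ht)⟩

lemma exists_nonempty_mem_cliqueFamily [Finite V] [Nonempty V] {r : ℕ} (hr : 1 ≤ r) :
    ∃ X ∈ cliqueFamily G r, X.Nonempty := by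
  obtain ⟨M, hM⟩ := G.maximumClique_exists
  rcases le_or_gt r #M with hrM | hMr
  · obtain ⟨X, hXM, rfl⟩ := exists_subset_card_eq hrM
    exact ⟨X, .inl ⟨hM.isClique.subset (coe_subset.2 hXM), rfl⟩, card_pos.1 hr⟩
  · refine ⟨M, .inr ⟨hM.isMaxClique, hMr⟩, card_pos.1 ?_⟩
    simpa using hM.maximum {Classical.arbitrary V} (by simp)

lemma le_gamma [Finite V] {r : ℕ} {X : Finset V} (hX : X ∈ cliqueFamily G r) :
    gammaVal G X ≤ gamma G r := by
  refine le_csSup (Set.Finite.bddAbove ?_) ⟨X, hX, rfl⟩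
  refine (Set.finite_range (gammaVal G)).subset ?_
  rintro _ ⟨Y, -, rfl⟩
  exact ⟨Y, rfl⟩

lemma gamma_le_of_forall {r : ℕ} {c : ℝ} (hc : 0 ≤ c)
    (h : ∀ X ∈ cliqueFamily G r, gammaVal G X ≤ c) : gamma G r ≤ c :=
  Real.sSup_le (by rintro _ ⟨X, hX, rfl⟩; exact h X hX) hc

lemma gamma_nonneg (r : ℕ) : 0 ≤ gamma G r :=
  Real.sSup_nonneg (by rintro _ ⟨X, -, rfl⟩; exact gammaVal_nonneg X)

lemma one_le_gamma [Finite V] [Nonempty V] {r : ℕ} (hr : 1 ≤ r) : 1 ≤ gamma G r := by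
  obtain ⟨X, hX, hXne⟩ := exists_nonempty_mem_cliqueFamily (G := G) hr
  exact (one_le_gammaVal hXne).trans (le_gamma hX)

end StmtDefs

namespace SimpleGraph.Copy

variable {V W : Type*} {G : SimpleGraph V} {H : SimpleGraph W}

lemma isClique_map (f : Copy H G) {s : Finset W} (hs : H.IsClique ↑s) :
    G.IsClique ↑(s.map f.toEmbedding) := by
  rw [coe_map]
  rintro _ ⟨a, ha, rfl⟩ _ ⟨b, hb, rfl⟩ hab
  exact f.toHom.map_adj (hs ha hb fun h => hab (h ▸ rfl))

lemma isNClique_map (f : Copy H G) {n : ℕ} {s : Finset W} (hs : H.IsNClique n s) :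
    G.IsNClique n (s.map f.toEmbedding) :=
  ⟨f.isClique_map hs.isClique, (card_map _).trans hs.card_eq⟩

lemma ndeg_le [Finite V] (f : Copy H G) (w : W) : ndeg H w ≤ ndeg G (f w) :=
  Nat.card_le_card_of_injective _ (f.mapNeighborSet w).injective

lemma cliqueAt_le [Finite V] (f : Copy H G) (w : W) : cliqueAt H w ≤ cliqueAt G (f w) := by
  refine csSup_le_csSup (bddAbove_cliqueSizesAt (f w)) ⟨1, one_mem_cliqueSizesAt w⟩ ?_
  rintro n ⟨s, hs, hws⟩
  exact ⟨s.map f.toEmbedding, f.isNClique_map hs, mem_map_of_mem _ hws⟩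

lemma gammaVal_le [Finite V] (f : Copy H G) (X : Finset W) :
    gammaVal H X ≤ gammaVal G (X.map f.toEmbedding) := by
  rw [gammaVal, gammaVal, card_map, sum_map]
  gcongr with w
  · exact_mod_cast f.ndeg_le w
  · exact_mod_cast f.cliqueAt_le w

theorem gamma_le [Finite V] (f : Copy H G) {r : ℕ} (hr : r ≤ 2) : gamma H r ≤ gamma G r := by
  refine gamma_le_of_forall (gamma_nonneg r) fun X hX => ?_
  rcases hX with ⟨hX, rfl⟩ | ⟨hX, hXr⟩
  · exact (f.gammaVal_le X).trans (le_gamma (.inl ⟨f.isClique_map hX, card_map _⟩))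
  rcases Nat.le_one_iff_eq_zero_or_eq_one.1 (by omega : #X ≤ 1) with hX0 | hX1
  · rw [card_eq_zero.1 hX0, gammaVal_empty]
    exact gamma_nonneg r
  · obtain ⟨w, rfl⟩ := card_eq_one.1 hX1
    have : Nonempty V := ⟨f w⟩
    rw [hX.gammaVal_singleton]
    exact one_le_gamma (by omega)

end SimpleGraph.Copy

/-- gamma_1 and gamma_2 are monotone under induced subgraphs. -/
theorem stmt12 {V : Type*} [Fintype V] (Q : SimpleGraph V) (s : Set V)
    (r : ℕ) (hr : r = 1 ∨ r = 2) :
    gamma (Q.induce s) r ≤ gamma Q r :=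
  (SimpleGraph.Copy.induce Q s).gamma_le (by omega)
end

section
/- Let G be a multigraph whose underlying simple graph is a cycle on 2t+1 vertices (t ≥ 1) and which is critical and elementary with χ'(G) = k+1. If every edge multiplicity x_i ≥ 2 and Q = L(G), then γ̃_3(Q) ≥ 5X/(4t+2), where X is the total number of edges of G and γ̃_3(Q) = max over subgraphs H of Q of γ_3(H). -/
open scoped Classical

/-- A loopless multigraph on vertex type `V` with edge type `E`. -/
structure Multigraph (V : Type*) (E : Type*) where
  ends : E → Sym2 V
  loopless : ∀ e, ¬ (ends e).IsDiag

namespace Multigraph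

variable {V E : Type*} (G : Multigraph V E)

/-- Two edges are adjacent if they are distinct and share an endpoint. -/
def EdgeAdj (e f : E) : Prop := e ≠ f ∧ ∃ v, v ∈ G.ends e ∧ v ∈ G.ends f

/-- A proper `k`-edge-coloring. -/
def IsProperEdgeColoring {k : ℕ} (c : E → Fin k) : Prop :=
  ∀ e f, G.EdgeAdj e f → c e ≠ c f

/-- The chromatic index: least `k` admitting a proper `k`-edge-coloring. -/
noncomputable def chromIndex : ℕ :=
  sInf {k | ∃ c : E → Fin k, G.IsProperEdgeColoring c}

/-- The degree of a vertex (counting multiplicities). -/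
noncomputable def degree [Fintype E] (v : V) : ℕ :=
  (Finset.univ.filter (fun e => v ∈ G.ends e)).card

/-- Maximum degree. -/
noncomputable def maxDegree [Fintype V] [Fintype E] : ℕ :=
  Finset.univ.sup (fun v => G.degree v)

/-- Ceiling division. -/
def cdiv (a b : ℕ) : ℕ := (a + b - 1) / b

/-- The Goldberg--Seymour density bound `W(G)`: the max over subgraphs `H`
(given by a vertex set and a set of edges with both ends in it) with at least
two vertices of `⌈|E(H)| / ⌊|V(H)|/2⌋⌉`. -/
noncomputable def W [Fintype V] [Fintype E] : ℕ :=
  Finset.univ.sup (fun p : Finset V × Finset E =>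
    if 2 ≤ p.1.card ∧ ∀ e ∈ p.2, ∀ v ∈ G.ends e, v ∈ p.1
    then cdiv p.2.card (p.1.card / 2) else 0)

/-- Delete an edge. -/
def deleteEdge (e0 : E) : Multigraph V {f : E // f ≠ e0} where
  ends := fun f => G.ends f.1
  loopless := fun f => G.loopless f.1

/-- A graph is (edge-)critical if deleting any edge decreases the chromatic index. -/
noncomputable def Critical [Fintype V] [Fintype E] : Prop :=
  ∀ e0 : E, (G.deleteEdge e0).chromIndex < G.chromIndex

/-- A graph is elementary if its chromatic index equals `W(G)`. -/
noncomputable def Elementary [Fintype V] [Fintype E] : Prop :=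
  G.chromIndex = G.W

/-- The line graph of a multigraph, as a simple graph on the edge type. -/
def lineGraph : SimpleGraph E where
  Adj := G.EdgeAdj
  symm := ⟨by
    rintro e f ⟨hne, v, hv1, hv2⟩
    exact ⟨hne.symm, v, hv2, hv1⟩⟩
  loopless := ⟨fun e h => h.1 rfl⟩

/-- The multiplicity of the pair `u v`: number of edges joining them. -/
noncomputable def mul [Fintype E] (u v : V) : ℕ :=
  (Finset.univ.filter (fun e => G.ends e = s(u, v))).card

/-- The maximum edge multiplicity. -/
noncomputable def maxMul [Fintype V] [Fintype E] : ℕ :=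
  Finset.univ.sup (fun p : V × V => G.mul p.1 p.2)

end Multigraph

open scoped Classical

open StmtDefs

/-!
Write bundle `i` for the `x i` parallel edges `v_i v_{i+1}`. In `Q = L(G)` an edge of bundle
`i` is adjacent to every other edge of bundles `i - 1`, `i`, `i + 1`, and bundles `i`, `i + 1`
together form a clique (all their edges pass through `v_{i+1}`). For the triangle made of one
edge of bundle `i` and two edges of bundle `i + 1`, these two bounds give
`γ_3(Q) ≥ (x_{i-1} + 4 x_i + 6 x_{i+1} + 4 x_{i+2}) / 6`. The windows
`x_{i-1} + 4 x_i + 6 x_{i+1} + 4 x_{i+2}` sum to `15 X` over the `2t + 1` values of `i`, so one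
of them is at least `15 X / (2t + 1)`.
-/

lemma Finset.card_sigma_univ_fin {ι : Type*} (x : ι → ℕ) (S : Finset ι) :
    (S.sigma fun i => (univ : Finset (Fin (x i)))).card = ∑ i ∈ S, x i := by
  simp [Finset.card_sigma]

lemma Fin.one_ne_zero_of_two_le {n : ℕ} [NeZero n] (hn : 2 ≤ n) : (1 : Fin n) ≠ 0 := by
  rw [Ne, Fin.ext_iff, Fin.val_zero, Fin.coe_ofNat_eq_mod, Nat.mod_eq_of_lt hn]
  omega

lemma Fin.one_add_one_eq_two' {n : ℕ} [NeZero n] : (1 + 1 : Fin n) = 2 := by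
  ext
  simp [Fin.val_add]

lemma Fin.two_ne_zero_of_three_le {n : ℕ} [NeZero n] (hn : 3 ≤ n) : (2 : Fin n) ≠ 0 := by
  rw [Ne, Fin.ext_iff, Fin.val_zero, Fin.coe_ofNat_eq_mod, Nat.mod_eq_of_lt hn]
  omega

namespace SimpleGraph

variable {V W : Type*} {Q : SimpleGraph V} {Q' : SimpleGraph W}

lemma IsNClique.le_card [Finite V] {m : ℕ} {s : Finset V} (hs : Q.IsNClique m s) :
    m ≤ Nat.card V := by
  rw [← hs.card_eq, ← Set.ncard_coe_finset]
  exact Set.ncard_le_card _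

lemma IsClique.map_embedding {s : Finset V} (hs : Q.IsClique s) (f : Q ↪g Q') :
    Q'.IsClique (s.map f.toEmbedding) := by
  rintro _ ha _ hb hab
  obtain ⟨a, ha', rfl⟩ := Finset.mem_map.1 ha
  obtain ⟨b, hb', rfl⟩ := Finset.mem_map.1 hb
  exact f.map_adj_iff.2 (hs ha' hb' (ne_of_apply_ne _ hab))

end SimpleGraph

namespace StmtDefs

variable {V W : Type*} {Q : SimpleGraph V} {Q' : SimpleGraph W}

lemma card_le_ndeg [Finite V] {v : V} {s : Finset V} (h : ∀ w ∈ s, Q.Adj v w) :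
    s.card ≤ ndeg Q v := by
  rw [ndeg, Nat.card_coe_set_eq, ← Set.ncard_coe_finset]
  exact Set.ncard_le_ncard h

lemma ndeg_le_card [Finite V] (Q : SimpleGraph V) (v : V) : ndeg Q v ≤ Nat.card V :=
  Finite.card_subtype_le _

lemma cliqueAt_le_card [Finite V] (Q : SimpleGraph V) (v : V) : cliqueAt Q v ≤ Nat.card V :=
  csSup_le' fun _ ⟨_, hs, _⟩ => hs.le_card

lemma card_le_cliqueAt [Finite V] {v : V} {s : Finset V} (hs : Q.IsClique s) (hv : v ∈ s) :
    s.card ≤ cliqueAt Q v :=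
  le_csSup ⟨Nat.card V, fun _ ⟨_, ht, _⟩ => ht.le_card⟩ ⟨s, ⟨hs, rfl⟩, hv⟩

lemma ndeg_le_of_embedding [Finite W] (f : Q ↪g Q') (v : V) : ndeg Q v ≤ ndeg Q' (f v) :=
  Nat.card_le_card_of_injective (fun w => ⟨f w, f.map_adj_iff.2 w.2⟩)
    fun _ _ h => Subtype.ext (f.injective (congrArg Subtype.val h))

lemma cliqueAt_le_of_embedding [Finite W] (f : Q ↪g Q') (v : V) :
    cliqueAt Q v ≤ cliqueAt Q' (f v) := by
  refine csSup_le' ?_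
  rintro m ⟨s, hs, hv⟩
  have := card_le_cliqueAt (hs.isClique.map_embedding f) (Finset.mem_map_of_mem _ hv)
  rwa [Finset.card_map, hs.card_eq] at this

lemma gammaVal_le_of_embedding [Finite W] (f : Q ↪g Q') (s : Finset V) :
    gammaVal Q s ≤ gammaVal Q' (s.map f.toEmbedding) := by
  rw [gammaVal, gammaVal, Finset.card_map, Finset.sum_map]
  gcongr with v
  · exact ndeg_le_of_embedding f v
  · exact cliqueAt_le_of_embedding f v

lemma gammaVal_le_card [Finite V] (Q : SimpleGraph V) (s : Finset V) :
    gammaVal Q s ≤ Nat.card V + 1 := by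
  rcases s.eq_empty_or_nonempty with rfl | hs
  · simp only [gammaVal, Finset.sum_empty, mul_zero]
    positivity
  rw [gammaVal, inv_mul_le_iff₀ (by exact_mod_cast hs.card_pos), ← nsmul_eq_mul]
  refine Finset.sum_le_card_nsmul _ _ _ fun v _ => ?_
  have hd : (ndeg Q v : ℝ) ≤ Nat.card V := by exact_mod_cast ndeg_le_card Q v
  have hc : (cliqueAt Q v : ℝ) ≤ Nat.card V := by exact_mod_cast cliqueAt_le_card Q v
  linarith

lemma gamma_le_card [Finite V] (Q : SimpleGraph V) (r : ℕ) : gamma Q r ≤ Nat.card V + 1 :=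
  Real.sSup_le (by rintro _ ⟨s, -, rfl⟩; exact gammaVal_le_card Q s) (by positivity)

lemma gammaVal_le_gamma [Finite V] {r : ℕ} {s : Finset V} (hs : Q.IsClique s)
    (hr : s.card = r) : gammaVal Q s ≤ gamma Q r :=
  le_csSup ⟨Nat.card V + 1, by rintro _ ⟨s, -, rfl⟩; exact gammaVal_le_card Q s⟩
    ⟨s, Or.inl ⟨hs, hr⟩, rfl⟩

lemma gamma_le_gammaTilde [Finite V] {s : Set V} {H : SimpleGraph s} (hH : H ≤ Q.induce s)
    (r : ℕ) : gamma H r ≤ gammaTilde Q r := by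
  refine le_csSup ⟨Nat.card V + 1, ?_⟩ ⟨s, H, hH, rfl⟩
  rintro _ ⟨s, H, -, rfl⟩
  have : (Nat.card s : ℝ) ≤ Nat.card V := by exact_mod_cast Finite.card_subtype_le _
  linarith [gamma_le_card H r]

lemma gammaVal_le_gammaTilde [Finite V] {r : ℕ} {s : Finset V} (hs : Q.IsClique s)
    (hr : s.card = r) : gammaVal Q s ≤ gammaTilde Q r := by
  let f := Q.induceUnivIso.symm.toEmbedding
  calc gammaVal Q s ≤ gammaVal (Q.induce Set.univ) (s.map f.toEmbedding) :=
        gammaVal_le_of_embedding f s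
    _ ≤ gamma (Q.induce Set.univ) r :=
        gammaVal_le_gamma (hs.map_embedding f) (by rw [Finset.card_map, hr])
    _ ≤ gammaTilde Q r := gamma_le_gammaTilde le_rfl r

end StmtDefs

lemma Multigraph.isClique_lineGraph_setOf_mem_ends {V E : Type*} (G : Multigraph V E) (v : V) :
    G.lineGraph.IsClique {e | v ∈ G.ends e} :=
  fun _ he _ hf hne => ⟨hne, v, he, hf⟩

lemma exists_window_ge_average {n : ℕ} [NeZero n] (x : Fin n → ℕ) :
    ∃ i, 15 * ∑ j, x j ≤ n * (x (i - 1) + 4 * x i + 6 * x (i + 1) + 4 * x (i + 2)) := by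
  have hshift (c : Fin n) : ∑ j, x (j + c) = ∑ j, x j := Equiv.sum_comp (Equiv.addRight c) x
  have hsum : ∑ i, (x (i - 1) + 4 * x i + 6 * x (i + 1) + 4 * x (i + 2)) = 15 * ∑ j, x j := by
    simp only [Finset.sum_add_distrib, ← Finset.mul_sum, sub_eq_add_neg, hshift]
    ring
  obtain ⟨i, -, hi⟩ := Finset.exists_le_of_sum_le (s := Finset.univ) Finset.univ_nonempty
    (f := fun _ => 15 * ∑ j, x j)
    (g := fun i => n * (x (i - 1) + 4 * x i + 6 * x (i + 1) + 4 * x (i + 2)))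
    (by simp [← Finset.mul_sum, hsum])
  exact ⟨i, hi⟩

section ThickenedCycle

variable {n : ℕ} [NeZero n] {x : Fin n → ℕ}
  {G : Multigraph (Fin n) ((i : Fin n) × Fin (x i))}

lemma window_le_ndeg_lineGraph (hG : ∀ p, G.ends p = s(p.1, p.1 + 1)) (hn : 3 ≤ n)
    (u : (i : Fin n) × Fin (x i)) :
    x (u.1 - 1) + x u.1 + x (u.1 + 1) ≤ ndeg G.lineGraph u + 1 := by
  set i := u.1
  have h0 : (1 : Fin n) ≠ 0 := Fin.one_ne_zero_of_two_le (by omega)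
  have h1 : i - 1 ≠ i := by simpa using h0
  have h2 : i - 1 ≠ i + 1 := fun h => Fin.two_ne_zero_of_three_le hn <| by
    calc (2 : Fin n) = 1 + 1 := Fin.one_add_one_eq_two'.symm
      _ = i + 1 - (i - 1) := by abel
      _ = 0 := by rw [h, sub_self]
  have h3 : i ≠ i + 1 := by simpa using h0.symm
  let B : Finset ((j : Fin n) × Fin (x j)) := ({i - 1, i, i + 1} : Finset (Fin n)).sigma
    fun _ => Finset.univ
  have hB : B.card = x (i - 1) + x i + x (i + 1) := by
    rw [Finset.card_sigma_univ_fin, Finset.sum_insert (by simp [h1, h2]),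
      Finset.sum_pair h3, add_assoc]
  have hadj : ∀ w ∈ B.erase u, G.lineGraph.Adj u w := by
    intro w hw
    obtain ⟨hwu, hw⟩ := Finset.mem_erase.1 hw
    refine ⟨Ne.symm hwu, ?_⟩
    simp only [B, Finset.mem_sigma, Finset.mem_insert, Finset.mem_singleton] at hw
    rcases hw.1 with hw | hw | hw
    · exact ⟨i, by simp [hG, i], by simp [hG, hw]⟩
    · exact ⟨i, by simp [hG, i], by simp [hG, hw]⟩
    · exact ⟨i + 1, by simp [hG, i], by simp [hG, hw]⟩
  have := Finset.card_erase_add_one (s := B) (a := u) (by simp [B, i])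
  have := card_le_ndeg hadj
  omega

lemma isClique_lineGraph_sigma_pair (hG : ∀ p, G.ends p = s(p.1, p.1 + 1)) (i : Fin n) :
    G.lineGraph.IsClique (({i, i + 1} : Finset (Fin n)).sigma fun _ => Finset.univ :
      Finset ((j : Fin n) × Fin (x j))) := by
  refine (G.isClique_lineGraph_setOf_mem_ends (i + 1)).subset ?_
  rintro ⟨j, b⟩ hj
  simp only [Finset.coe_sigma, Set.mem_sigma_iff, Finset.coe_insert, Finset.coe_singleton,
    Set.mem_insert_iff, Set.mem_singleton_iff] at hj
  rcases hj.1 with rfl | rfl <;> simp [hG]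

lemma pair_le_cliqueAt_lineGraph (hG : ∀ p, G.ends p = s(p.1, p.1 + 1)) (hn : 2 ≤ n)
    (u : (i : Fin n) × Fin (x i)) :
    x u.1 + x (u.1 + 1) ≤ cliqueAt G.lineGraph u := by
  have := card_le_cliqueAt (isClique_lineGraph_sigma_pair hG u.1) (v := u) (by simp)
  rwa [Finset.card_sigma_univ_fin,
    Finset.sum_pair (by simpa using (Fin.one_ne_zero_of_two_le hn).symm)] at this

lemma window_le_gammaTilde_lineGraph (hG : ∀ p, G.ends p = s(p.1, p.1 + 1)) (hn : 3 ≤ n)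
    (hx : ∀ i, 2 ≤ x i) (i : Fin n) :
    ((x (i - 1) + 4 * x i + 6 * x (i + 1) + 4 * x (i + 2) : ℕ) : ℝ) / 6
      ≤ gammaTilde G.lineGraph 3 := by
  have h0 : (1 : Fin n) ≠ 0 := Fin.one_ne_zero_of_two_le (by omega)
  let a : (j : Fin n) × Fin (x j) := ⟨i, 0, by linarith [hx i]⟩
  let b : (j : Fin n) × Fin (x j) := ⟨i + 1, 0, by linarith [hx (i + 1)]⟩
  let c : (j : Fin n) × Fin (x j) := ⟨i + 1, 1, by linarith [hx (i + 1)]⟩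
  have hab : a ≠ b := fun h => h0 (by simpa [a, b] using congrArg Sigma.fst h)
  have hac : a ≠ c := fun h => h0 (by simpa [a, c] using congrArg Sigma.fst h)
  have hbc : b ≠ c := by simp [b, c]
  have hT : G.lineGraph.IsClique ({a, b, c} : Finset _) :=
    (isClique_lineGraph_sigma_pair hG i).subset (by simp [Set.insert_subset_iff, a, b, c])
  have hcard : ({a, b, c} : Finset _).card = 3 := by
    rw [Finset.card_insert_of_notMem (by simp [hab, hac]), Finset.card_pair hbc]
  refine le_trans ?_ (gammaVal_le_gammaTilde hT hcard)
  rw [gammaVal, hcard, Finset.sum_insert (by simp [hab, hac]), Finset.sum_pair hbc]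
  have hda := window_le_ndeg_lineGraph hG hn a
  have hdb := window_le_ndeg_lineGraph hG hn b
  have hdc := window_le_ndeg_lineGraph hG hn c
  have hca := pair_le_cliqueAt_lineGraph hG (by omega) a
  have hcb := pair_le_cliqueAt_lineGraph hG (by omega) b
  have hcc := pair_le_cliqueAt_lineGraph hG (by omega) c
  simp only [b, c, add_sub_cancel_right, add_assoc i 1 1, Fin.one_add_one_eq_two']
    at hdb hdc hcb hcc
  rify at hda hdb hdc hca hcb hcc
  push_cast
  linarith

end ThickenedCycle

theorem stmt14_general (t : ℕ) (ht : 1 ≤ t) (x : Fin (2 * t + 1) → ℕ)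
    (hx : ∀ i, 2 ≤ x i)
    (G : Multigraph (Fin (2 * t + 1)) ((i : Fin (2 * t + 1)) × Fin (x i)))
    (hG : ∀ p, G.ends p = s(p.1, p.1 + 1))
    (X : ℕ) (hX : X = ∑ i, x i) :
    (5 * X : ℝ) / (4 * t + 2) ≤ gammaTilde G.lineGraph 3 := by
  obtain ⟨i, hi⟩ := exists_window_ge_average x
  refine le_trans ?_ (window_le_gammaTilde_lineGraph hG (by omega) hx i)
  rw [← hX] at hi
  rify at hi
  rw [div_le_div_iff₀ (by positivity) (by norm_num)]
  push_cast at hi ⊢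
  linarith

/-- for a critical elementary thickened odd cycle G with all
multiplicities at least 2 and Q = L(G), gamma-tilde_3(Q) ≥ 5X/(4t+2). -/
theorem stmt14 (t : ℕ) (ht : 1 ≤ t) (x : Fin (2 * t + 1) → ℕ)
    (hx : ∀ i, 2 ≤ x i)
    (G : Multigraph (Fin (2 * t + 1)) ((i : Fin (2 * t + 1)) × Fin (x i)))
    (hG : ∀ p, G.ends p = s(p.1, p.1 + 1))
    (k : ℕ) (hchi : G.chromIndex = k + 1)
    (hcrit : G.Critical) (helem : G.Elementary)
    (X : ℕ) (hX : X = ∑ i, x i) :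
    (5 * X : ℝ) / (4 * t + 2) ≤ gammaTilde G.lineGraph 3 :=
  stmt14_general t ht x hx G hG X hX
end

section
/- Let G be a critical multigraph with χ'(G) = k+1 where k ≥ Δ(G)+1, let φ be a proper k-edge-coloring of G − v₀v₁, let α be a color missing at v₀ and β a color missing at v₁. Then the maximal (α,β)-bicolored path starting at v₁ ends at v₀; i.e., P_{v₁}(α,β) is a path from v₁ to v₀. -/
open scoped Classical

/-!
Kempe-chain argument. Let `S` be the set of vertices reachable from `v₁` along edges coloured
`α` or `β`. Interchanging `α` and `β` on every edge meeting `S` keeps the colouring proper,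
because `S` is closed under such edges. If `v₀ ∉ S`, then afterwards `α` is missing at `v₁`
(where `β` was) and still at `v₀`, so `v₀v₁` can be coloured `α`, giving `χ'(G) ≤ k`.
-/

namespace Multigraph

variable {V E : Type*} (H : Multigraph V E) {k : ℕ}

def KempeAdj (c : E → Fin k) (α β : Fin k) (u w : V) : Prop :=
  ∃ f, (c f = α ∨ c f = β) ∧ H.ends f = s(u, w)

def MissingAt (c : E → Fin k) (v : V) (α : Fin k) : Prop :=
  ∀ f, v ∈ H.ends f → c f ≠ α

def KempeClosed (c : E → Fin k) (α β : Fin k) (S : Set V) : Prop :=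
  ∀ u w, u ∈ S → H.KempeAdj c α β u w → w ∈ S

noncomputable def swapOn (c : E → Fin k) (α β : Fin k) (S : Set V) : E → Fin k :=
  fun f => if ∃ u ∈ H.ends f, u ∈ S then Equiv.swap α β (c f) else c f

section KempeSwap

variable {H} {c : E → Fin k} {α β : Fin k} {S : Set V}

lemma mem_of_kempeClosed (hS : H.KempeClosed c α β S) {f : E}
    (hf : c f = α ∨ c f = β) {u w : V} (hu : u ∈ H.ends f) (huS : u ∈ S)
    (hw : w ∈ H.ends f) : w ∈ S := by
  obtain ⟨u', hu'⟩ := Sym2.mem_iff_exists.mp hu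
  rw [hu', Sym2.mem_iff] at hw
  rcases hw with rfl | rfl
  · exact huS
  · exact hS u _ huS ⟨f, hf, hu'⟩

lemma swapOn_of_meets {f : E} {u : V} (hu : u ∈ H.ends f) (huS : u ∈ S) :
    H.swapOn c α β S f = Equiv.swap α β (c f) :=
  if_pos ⟨u, hu, huS⟩

lemma swapOn_of_not_meets {f : E} (hf : ¬ ∃ u ∈ H.ends f, u ∈ S) :
    H.swapOn c α β S f = c f :=
  if_neg hf

/-- The shared vertex lies outside `S`, so by closedness `e` is coloured neither `α` nor `β`. -/
lemma swapOn_ne_of_meets_of_not_meets (hc : H.IsProperEdgeColoring c)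
    (hS : H.KempeClosed c α β S) {e f : E} (hef : H.EdgeAdj e f)
    (he : ∃ u ∈ H.ends e, u ∈ S) (hf : ¬ ∃ u ∈ H.ends f, u ∈ S) :
    H.swapOn c α β S e ≠ H.swapOn c α β S f := by
  have hce := hc e f hef
  obtain ⟨-, v, hve, hvf⟩ := hef
  obtain ⟨u, hu, huS⟩ := he
  have hcol : ¬ (c e = α ∨ c e = β) := fun hcol =>
    hf ⟨v, hvf, mem_of_kempeClosed hS hcol hu huS hve⟩
  rw [swapOn_of_meets hu huS, swapOn_of_not_meets hf,
    Equiv.swap_apply_of_ne_of_ne (fun h => hcol (.inl h)) (fun h => hcol (.inr h))]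
  exact hce

theorem IsProperEdgeColoring.swapOn (hc : H.IsProperEdgeColoring c)
    (hS : H.KempeClosed c α β S) :
    H.IsProperEdgeColoring (H.swapOn c α β S) := by
  intro e f hef
  by_cases he : ∃ u ∈ H.ends e, u ∈ S <;> by_cases hf : ∃ u ∈ H.ends f, u ∈ S
  · obtain ⟨u, hu, huS⟩ := he
    obtain ⟨w, hw, hwS⟩ := hf
    rw [swapOn_of_meets hu huS, swapOn_of_meets hw hwS]
    exact (Equiv.swap α β).injective.ne (hc e f hef)
  · exact swapOn_ne_of_meets_of_not_meets hc hS hef he hf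
  · exact (swapOn_ne_of_meets_of_not_meets hc hS (H.lineGraph.adj_symm hef) hf he).symm
  · rw [swapOn_of_not_meets he, swapOn_of_not_meets hf]
    exact hc e f hef

lemma MissingAt.swapOn_of_mem {v : V} (hβ : H.MissingAt c v β) (hv : v ∈ S) :
    H.MissingAt (H.swapOn c α β S) v α := by
  intro f hvf
  rw [swapOn_of_meets hvf hv, Ne, Equiv.swap_apply_eq_iff, Equiv.swap_apply_left]
  exact hβ f hvf

lemma MissingAt.swapOn_of_not_mem (hS : H.KempeClosed c α β S)
    {v : V} (hα : H.MissingAt c v α) (hv : v ∉ S) :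
    H.MissingAt (H.swapOn c α β S) v α := by
  intro f hvf
  by_cases hf : ∃ u ∈ H.ends f, u ∈ S
  · obtain ⟨u, hu, huS⟩ := hf
    rw [swapOn_of_meets hu huS, Ne, Equiv.swap_apply_eq_iff, Equiv.swap_apply_left]
    exact fun hβ => hv (mem_of_kempeClosed hS (.inr hβ) hu huS hvf)
  · rw [swapOn_of_not_meets hf]
    exact hα f hvf

end KempeSwap

lemma chromIndex_le {c : E → Fin k} (hc : H.IsProperEdgeColoring c) : H.chromIndex ≤ k :=
  Nat.sInf_le ⟨c, hc⟩

lemma chromIndex_le_of_missingAt_ends {e0 : E} {c : {f : E // f ≠ e0} → Fin k}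
    (hc : (H.deleteEdge e0).IsProperEdgeColoring c) {α : Fin k}
    (hα : ∀ v ∈ H.ends e0, (H.deleteEdge e0).MissingAt c v α) : H.chromIndex ≤ k := by
  refine H.chromIndex_le (c := fun e => if h : e = e0 then α else c ⟨e, h⟩) ?_
  rintro e f ⟨hne, v, hve, hvf⟩
  by_cases he : e = e0 <;> by_cases hf : f = e0
  · exact absurd (he.trans hf.symm) hne
  · subst he
    simpa [hf] using (hα v hve ⟨f, hf⟩ hvf).symm
  · subst hf
    simpa [he] using hα v hvf ⟨e, he⟩ hve
  · simpa [he, hf] using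
      hc ⟨e, he⟩ ⟨f, hf⟩ ⟨fun h => hne (congrArg Subtype.val h), v, hve, hvf⟩

end Multigraph

theorem stmt16_general {V E : Type*} (G : Multigraph V E)
    (k : ℕ) (hchi : G.chromIndex = k + 1)
    (e0 : E) (v0 v1 : V) (he0 : G.ends e0 = s(v0, v1))
    (c : {f : E // f ≠ e0} → Fin k)
    (hc : (G.deleteEdge e0).IsProperEdgeColoring c)
    (α β : Fin k)
    (hα : ∀ f : {f : E // f ≠ e0}, v0 ∈ G.ends f.1 → c f ≠ α)
    (hβ : ∀ f : {f : E // f ≠ e0}, v1 ∈ G.ends f.1 → c f ≠ β) :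
    Relation.ReflTransGen
      (fun u w => ∃ f : {f : E // f ≠ e0},
        (c f = α ∨ c f = β) ∧ G.ends f.1 = s(u, w)) v1 v0 := by
  by_contra hv0
  let S : Set V := {u | Relation.ReflTransGen ((G.deleteEdge e0).KempeAdj c α β) v1 u}
  have hS : (G.deleteEdge e0).KempeClosed c α β S :=
    fun _ _ hu huw => Relation.ReflTransGen.tail hu huw
  have hmissing : ∀ v ∈ G.ends e0,
      (G.deleteEdge e0).MissingAt ((G.deleteEdge e0).swapOn c α β S) v α := by
    rw [he0]
    intro v hv
    rcases Sym2.mem_iff.mp hv with rfl | rfl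
    · exact Multigraph.MissingAt.swapOn_of_not_mem hS hα hv0
    · exact Multigraph.MissingAt.swapOn_of_mem hβ Relation.ReflTransGen.refl
  have := G.chromIndex_le_of_missingAt_ends (hc.swapOn hS) hmissing
  omega

/-- in a critical graph with chi'(G) = k+1, k ≥ Delta(G)+1, given
a proper k-edge-coloring of G − v0v1 with alpha missing at v0 and beta missing
at v1, the maximal (alpha,beta)-bicolored path from v1 ends at v0; in
particular v0 is joined to v1 by a walk whose edges are colored alpha or
beta. -/
theorem stmt16 {V E : Type*} [Fintype V] [Fintype E] (G : Multigraph V E)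
    (k : ℕ) (hcrit : G.Critical) (hchi : G.chromIndex = k + 1)
    (hk : G.maxDegree + 1 ≤ k)
    (e0 : E) (v0 v1 : V) (he0 : G.ends e0 = s(v0, v1))
    (c : {f : E // f ≠ e0} → Fin k)
    (hc : (G.deleteEdge e0).IsProperEdgeColoring c)
    (α β : Fin k)
    (hα : ∀ f : {f : E // f ≠ e0}, v0 ∈ G.ends f.1 → c f ≠ α)
    (hβ : ∀ f : {f : E // f ≠ e0}, v1 ∈ G.ends f.1 → c f ≠ β) :
    Relation.ReflTransGen
      (fun u w => ∃ f : {f : E // f ≠ e0},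
        (c f = α ∨ c f = β) ∧ G.ends f.1 = s(u, w)) v1 v0 :=
  stmt16_general G k hchi e0 v0 v1 he0 c hc α β hα hβ
end
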